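/- Let G be an abelian group, φ : G → G a group endomorphism, and H a φ-inert subgroup of G. Then the limit lim_{n→∞} log|T_n(φ,H)/H| / n exists and is finite; in particular, for every positive integer n the quotient T_n(φ,H)/H is finite. -/

import Mathlib

open Filter Topology ENNReal

variable {G : Type*}

/-- The `n`-th partial `φ`-trajectory of a subgroup `H`:
`T_n(φ,H) = H + φ(H) + ... + φ^{n-1}(H)`. -/
noncomputable def traj [AddCommGroup G] (φ : AddMonoid.End G) (H : AddSubgroup G) (n : ℕ) :
    AddSubgroup G :=
  ⨆ i ∈ Finset.range n, H.map (φ ^ i)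

/-- `H` is `φ`-inert if `(H + φ(H))/H` is finite. -/
def IsInert [AddCommGroup G] (φ : AddMonoid.End G) (H : AddSubgroup G) : Prop :=
  Finite (↥(H ⊔ H.map φ) ⧸ H.addSubgroupOf (H ⊔ H.map φ))

/-- The sequence `n ↦ log |T_n(φ,H)/H| / n`. -/
noncomputable def entFun [AddCommGroup G] (φ : AddMonoid.End G) (H : AddSubgroup G) (n : ℕ) : ℝ :=
  Real.log (Nat.card (↥(traj φ H n) ⧸ H.addSubgroupOf (traj φ H n))) / n

/-- The intrinsic entropy of `φ` with respect to `H`: the limit of `entFun φ H`. -/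
noncomputable def entWrt [AddCommGroup G] (φ : AddMonoid.End G) (H : AddSubgroup G) : ℝ :=
  limUnder atTop (entFun φ H)

/-- The intrinsic algebraic entropy of `φ`. -/
noncomputable def intrinsicEnt [AddCommGroup G] (φ : AddMonoid.End G) : ℝ≥0∞ :=
  ⨆ (H : AddSubgroup G) (_ : IsInert φ H), ENNReal.ofReal (entWrt φ H)

/-- The `φ`-trajectory of `H`: `T(φ,H) = ⋃_{n ≥ 1} T_n(φ,H)`. -/
noncomputable def trajAll [AddCommGroup G] (φ : AddMonoid.End G) (H : AddSubgroup G) :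
    AddSubgroup G :=
  ⨆ n : ℕ, traj φ H (n + 1)

section Aux
variable [AddCommGroup G] (φ : AddMonoid.End G) (H : AddSubgroup G)

lemma coe_pow_succ (n : ℕ) :
    ((φ ^ (n+1) : AddMonoid.End G) : G →+ G) = (φ : G →+ G).comp (φ ^ n : AddMonoid.End G) := by
  rw [pow_succ']; rfl

lemma map_pow_zero : H.map (φ ^ 0 : AddMonoid.End G) = H := by
  have h : ((φ ^ 0 : AddMonoid.End G) : G →+ G) = AddMonoidHom.id G := by
    rw [pow_zero]; rfl
  rw [h, AddSubgroup.map_id]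

lemma traj_zero : traj φ H 0 = ⊥ := by simp [traj]

lemma traj_succ (n : ℕ) : traj φ H (n+1) = traj φ H n ⊔ H.map (φ ^ n) := by
  rw [traj, traj, Finset.range_add_one, Finset.iSup_insert, sup_comm]

lemma traj_one : traj φ H 1 = H := by
  rw [traj_succ, traj_zero, bot_sup_eq, map_pow_zero]

lemma traj_le_succ (n : ℕ) : traj φ H n ≤ traj φ H (n+1) := by
  rw [traj_succ]; exact le_sup_left

lemma H_le_traj (n : ℕ) : H ≤ traj φ H (n+1) := by
  induction n with
  | zero => rw [traj_one]
  | succ m ih => exact ih.trans (traj_le_succ φ H (m+1))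

lemma map_traj_le (n : ℕ) : (traj φ H n).map (φ : G →+ G) ≤ traj φ H (n+1) := by
  refine (AddSubgroup.map_le_iff_le_comap).mpr ?_
  rw [traj]
  refine iSup₂_le fun i hi => (AddSubgroup.map_le_iff_le_comap).mp ?_
  erw [AddSubgroup.map_map]
  rw [← coe_pow_succ, traj]
  exact le_iSup₂_of_le (i+1)
    (Finset.mem_range.mpr (Nat.succ_lt_succ (Finset.mem_range.mp hi))) le_rfl



end Aux

section Aux2
variable [AddCommGroup G] (φ : AddMonoid.End G) (H : AddSubgroup G)

lemma c_dvd (n : ℕ) :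
    (traj φ H (n+1)).relIndex (traj φ H (n+2)) ∣ (traj φ H n).relIndex (traj φ H (n+1)) := by
  have h1 : (traj φ H n).relIndex (traj φ H (n+1))
      = (traj φ H n).relIndex (H.map (φ ^ n)) := by
    rw [traj_succ, AddSubgroup.relIndex_sup_left]
  have h2 : (traj φ H (n+1)).relIndex (traj φ H (n+2))
      = ((traj φ H (n+1)).comap (φ : G →+ G)).relIndex (H.map (φ ^ n)) := by
    rw [traj_succ φ H (n+1), AddSubgroup.relIndex_sup_left,
      show H.map (φ ^ (n+1)) = (H.map (φ ^ n)).map (φ : G →+ G) by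
        erw [AddSubgroup.map_map]; rw [← coe_pow_succ]]
    erw [← AddSubgroup.relIndex_comap]
  rw [h1, h2]
  exact AddSubgroup.relIndex_dvd_of_le_left _
    ((AddSubgroup.map_le_iff_le_comap).mp (map_traj_le φ H n))

end Aux2

/-- For a `φ`-inert subgroup `H`, the limit `lim_n log|T_n(φ,H)/H|/n` exists and is finite;
in particular each quotient `T_n(φ,H)/H` (for `n ≥ 1`) is finite. -/
theorem entWrt_exists [AddCommGroup G] (φ : AddMonoid.End G) (H : AddSubgroup G)
    (hH : IsInert φ H) :
    (∃ L : ℝ, Tendsto (entFun φ H) atTop (𝓝 L)) ∧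
      ∀ n : ℕ, 0 < n → Finite (↥(traj φ H n) ⧸ H.addSubgroupOf (traj φ H n)) := by
  classical
  set c : ℕ → ℕ := fun n => (traj φ H (n+1)).relIndex (traj φ H (n+2)) with hcdef
  have hrel : ∀ K L : AddSubgroup G, K.relIndex L = Nat.card (↥L ⧸ K.addSubgroupOf L) :=
    fun K L => rfl
  have hc0 : c 0 ≠ 0 := by
    have e2 : traj φ H 2 = H ⊔ H.map φ := by
      rw [traj_succ, traj_one, pow_one]
    have : c 0 = Nat.card (↥(H ⊔ H.map φ) ⧸ H.addSubgroupOf (H ⊔ H.map φ)) := by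
      rw [hcdef]
      simp only []
      rw [traj_one, e2, hrel]
    rw [this]
    exact Nat.card_ne_zero.mpr ⟨inferInstance, hH⟩
  have hcne : ∀ n, c n ≠ 0 := by
    intro n
    induction n with
    | zero => exact hc0
    | succ m ih =>
      intro h0
      exact ih (zero_dvd_iff.mp (h0 ▸ c_dvd φ H (m+1)))
  have hmono : ∀ n, c (n+1) ≤ c n :=
    fun n => Nat.le_of_dvd (Nat.pos_of_ne_zero (hcne n)) (c_dvd φ H (n+1))
  have hanti : Antitone c := antitone_nat_of_succ_le hmono
  set A : ℕ → ℕ := fun n => H.relIndex (traj φ H (n+1)) with hAdef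
  have hA : ∀ n, A n ≠ 0 ∧
      Real.log (A n) = ∑ k ∈ Finset.range n, Real.log (c k) := by
    intro n
    induction n with
    | zero =>
      constructor
      · show H.relIndex (traj φ H 1) ≠ 0
        rw [traj_one, AddSubgroup.relIndex_self]; exact one_ne_zero
      · show Real.log (H.relIndex (traj φ H 1) : ℝ) = _
        rw [traj_one, AddSubgroup.relIndex_self]
        simp
    | succ m ih =>
      have hmul : A (m+1) = A m * c m :=
        (AddSubgroup.relIndex_mul_relIndex H (traj φ H (m+1)) (traj φ H (m+2))
          (H_le_traj φ H m) (traj_le_succ φ H (m+1))).symm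
      constructor
      · rw [hmul]; exact mul_ne_zero ih.1 (hcne m)
      · rw [hmul, Nat.cast_mul,
          Real.log_mul (Nat.cast_ne_zero.mpr ih.1) (Nat.cast_ne_zero.mpr (hcne m)),
          ih.2, Finset.sum_range_succ]
  have hfin : ∀ n : ℕ, 0 < n → Finite (↥(traj φ H n) ⧸ H.addSubgroupOf (traj φ H n)) := by
    intro n hn
    obtain ⟨m, rfl⟩ := Nat.exists_eq_add_of_lt hn
    rw [zero_add]
    have : Nat.card (↥(traj φ H (m+1)) ⧸ H.addSubgroupOf (traj φ H (m+1))) ≠ 0 := by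
      rw [← hrel]; exact (hA m).1
    exact (Nat.card_ne_zero.mp this).2
  refine ⟨?_, hfin⟩
  -- eventual constancy of c
  obtain ⟨N, hN⟩ : ∃ N, c N = sInf (Set.range c) :=
    Nat.sInf_mem (Set.range_nonempty c)
  have hconst : ∀ n, N ≤ n → c n = c N := fun n hn =>
    le_antisymm (hanti hn) (hN ▸ Nat.sInf_le ⟨n, rfl⟩)
  set L : ℝ := Real.log (c N) with hLdef
  set v : ℕ → ℝ := fun k => if k = 0 then 0 else Real.log (c (k-1)) with hvdef
  have hv : Tendsto v atTop (𝓝 L) := by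
    refine tendsto_const_nhds.congr' ?_
    filter_upwards [eventually_ge_atTop (N+1)] with k hk
    have hk0 : k ≠ 0 := by omega
    simp only [hvdef, if_neg hk0]
    rw [hconst (k-1) (by omega)]
  have hces := hv.cesaro
  refine ⟨L, hces.congr' ?_⟩
  filter_upwards [eventually_ge_atTop 1] with n hn
  obtain ⟨m, rfl⟩ := Nat.exists_eq_add_of_lt hn
  rw [zero_add] at *
  have hsum : ∑ i ∈ Finset.range (m+1), v i = Real.log (A m) := by
    rw [Finset.sum_range_succ', (hA m).2]
    simp [hvdef]
  show ((m+1 : ℕ) : ℝ)⁻¹ * ∑ i ∈ Finset.range (m+1), v i = entFun φ H (m+1)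
  rw [hsum, entFun, ← hrel]
  simp only [hAdef]
  ring
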